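/- arXiv:1204.2900 — 3 statements merged into one kernel-verified Lean document; each statement's English description precedes it below -/
import Mathlib

section
/- Let C be a completely regular code in H(m,q) with distance partition {C, C_1, …, C_ρ}. Then C_ρ is completely regular with distance partition {C_ρ, C_{ρ−1}, …, C_1, C}; Aut(C) = Aut(C_ρ); and C is X-completely transitive if and only if C_ρ is X-completely transitive. -/
open Equiv Pointwise

section HammingDefs

variable {I : Type*} [Fintype I] [DecidableEq I] {q : ℕ}

/-- The permutation of the vertex set of the Hamming graph `H(I,q)` induced by the
letter permutations `g i` (acting coordinatewise) followed by the coordinate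
permutation `σ`:  `(α^x)_i = g_{σ⁻¹ i} (α_{σ⁻¹ i})`. -/
def tvp (g : I → Equiv.Perm (Fin q)) (σ : Equiv.Perm I) : Equiv.Perm (I → Fin q) where
  toFun α i := g (σ⁻¹ i) (α (σ⁻¹ i))
  invFun β i := (g i)⁻¹ (β (σ i))
  left_inv α := by funext i; simp
  right_inv β := by funext i; simp

/-- The automorphism group of the Hamming graph `H(I,q)`: all permutations of the
vertex set preserving adjacency (Hamming distance 1). -/
def autH (I : Type*) [Fintype I] [DecidableEq I] (q : ℕ) :
    Subgroup (Equiv.Perm (I → Fin q)) where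
  carrier := {y | ∀ α β : I → Fin q, hammingDist (y α) (y β) = 1 ↔ hammingDist α β = 1}
  one_mem' := by intro α β; simp
  mul_mem' := by
    intro a b ha hb α β
    rw [Equiv.Perm.mul_apply, Equiv.Perm.mul_apply, ha, hb]
  inv_mem' := by
    intro a ha α β
    simpa using (ha (a⁻¹ α) (a⁻¹ β)).symm

/-- The homomorphism `S_q × S_I → Sym(V(H(I,q)))` whose image is `Diag(S_q) ⋊ L`. -/
def diagLHom (I : Type*) [Fintype I] [DecidableEq I] (q : ℕ) :
    Equiv.Perm (Fin q) × Equiv.Perm I →* Equiv.Perm (I → Fin q) where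
  toFun x := tvp (fun _ => x.1) x.2
  map_one' := by
    ext α i
    simp [tvp]
  map_mul' x y := by
    ext α i
    simp [tvp, mul_inv_rev]

/-- The subgroup `Diag_I(S_q) ⋊ L` of the automorphism group of `H(I,q)`. -/
def diagL (I : Type*) [Fintype I] [DecidableEq I] (q : ℕ) :
    Subgroup (Equiv.Perm (I → Fin q)) :=
  (diagLHom I q).range

/-- The subgroup `L` of pure coordinate permutations of `H(I,q)`. -/
def permL (I : Type*) [Fintype I] [DecidableEq I] (q : ℕ) :
    Subgroup (Equiv.Perm (I → Fin q)) :=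
  ((diagLHom I q).comp (MonoidHom.inr (Equiv.Perm (Fin q)) (Equiv.Perm I))).range

/-- Distance from a vertex to a code. -/
noncomputable def distC (γ : I → Fin q) (C : Set (I → Fin q)) : ℕ :=
  sInf {d | ∃ β ∈ C, hammingDist γ β = d}

/-- The cell `C_i` of the distance partition of the code `C`. -/
def cell (C : Set (I → Fin q)) (i : ℕ) : Set (I → Fin q) :=
  {γ | distC γ C = i}

/-- The covering radius of the code `C`. -/
noncomputable def covRad (C : Set (I → Fin q)) : ℕ :=
  sSup {d | ∃ γ : I → Fin q, distC γ C = d}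

/-- The minimum distance of the code `C`. -/
noncomputable def minDist (C : Set (I → Fin q)) : ℕ :=
  sInf {d | ∃ β ∈ C, ∃ γ ∈ C, β ≠ γ ∧ hammingDist β γ = d}

/-- `S` is an orbit of the subgroup `X` of permutations of the vertex set. -/
def IsOrbitOf (X : Subgroup (Equiv.Perm (I → Fin q))) (S : Set (I → Fin q)) : Prop :=
  ∃ v, S = {w | ∃ x ∈ X, x v = w}

/-- `C` is `X`-neighbour transitive: `X` is a group of automorphisms of the Hamming
graph, and both `C` and its set of neighbours `C_1` are `X`-orbits. -/
def NbrTransitive (X : Subgroup (Equiv.Perm (I → Fin q))) (C : Set (I → Fin q)) : Prop :=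
  X ≤ autH I q ∧ IsOrbitOf X C ∧ IsOrbitOf X (cell C 1)

/-- `C` is `X`-completely transitive: every cell of the distance partition is an `X`-orbit. -/
def ComplTransitive (X : Subgroup (Equiv.Perm (I → Fin q))) (C : Set (I → Fin q)) : Prop :=
  X ≤ autH I q ∧ ∀ i ≤ covRad C, IsOrbitOf X (cell C i)

/-- `C` is diagonally `X`-neighbour transitive. -/
def DiagNbrTransitive (X : Subgroup (Equiv.Perm (I → Fin q))) (C : Set (I → Fin q)) : Prop :=
  NbrTransitive X C ∧ X ≤ diagL I q

/-- The automorphism group of the code `C`: the setwise stabiliser of `C` in the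
automorphism group of the Hamming graph. -/
def autCode (C : Set (I → Fin q)) : Subgroup (Equiv.Perm (I → Fin q)) :=
  autH I q ⊓ MulAction.stabilizer (Equiv.Perm (I → Fin q)) C

/-- Number of occurrences of the letter `a` in the vertex `α`. -/
def cnt (α : I → Fin q) (a : Fin q) : ℕ :=
  (Finset.univ.filter fun i => α i = a).card

/-- The composition `Q(α)` of a vertex: the set of pairs `(a, p)` such that the letter `a`
occurs exactly `p > 0` times in `α`. -/
def compOf (α : I → Fin q) : Set (Fin q × ℕ) :=
  {x | 0 < x.2 ∧ cnt α x.1 = x.2}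

/-- `Num(α)`: the set of pairs `(p, s)` such that exactly `s > 0` distinct letters occur
exactly `p > 0` times in `α`. -/
def numOf (α : I → Fin q) : Set (ℕ × ℕ) :=
  {x | 0 < x.1 ∧ 0 < x.2 ∧ (Finset.univ.filter fun a => cnt α a = x.1).card = x.2}

/-- The repetition code `Rep(I,q)`. -/
def repCode (I : Type*) [Fintype I] [DecidableEq I] (q : ℕ) : Set (I → Fin q) :=
  {α | ∃ a, α = fun _ => a}

/-- The injection code `Inj(I,q)`: all tuples with pairwise distinct entries. -/
def injCode (I : Type*) [Fintype I] [DecidableEq I] (q : ℕ) : Set (I → Fin q) :=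
  {α | Function.Injective α}

/-- The code `All(pq,q)`: all vertices in which every letter occurs exactly `p` times. -/
def allCode (I : Type*) [Fintype I] [DecidableEq I] (q p : ℕ) : Set (I → Fin q) :=
  {α | ∀ a, cnt α a = p}

/-- `C` is `s`-regular. -/
def RegularUpTo (C : Set (I → Fin q)) (s : ℕ) : Prop :=
  ∀ i ≤ s, ∀ γ ∈ cell C i, ∀ γ' ∈ cell C i, ∀ k : ℕ,
    {β ∈ C | hammingDist γ β = k}.ncard = {β ∈ C | hammingDist γ' β = k}.ncard

/-- `C` is completely regular. -/
def ComplRegular (C : Set (I → Fin q)) : Prop :=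
  RegularUpTo C (covRad C)

/-- `C` is a constant composition code: every letter occurs the same positive number of
times in every codeword. -/
def IsCCC (C : Set (I → Fin q)) : Prop :=
  C.Nonempty ∧ ∃ f : Fin q → ℕ, (∀ a, 0 < f a) ∧ ∀ β ∈ C, ∀ a, cnt β a = f a

end HammingDefs

section Weight

/-- The weight of a binary vertex: number of nonzero entries. -/
def wt {m : ℕ} (α : Fin m → Fin 2) : ℕ :=
  (Finset.univ.filter fun i => α i ≠ 0).card

/-- The code `W([m/2],2)`: binary `m`-tuples of weight `(m+1)/2` or `(m-1)/2`. -/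
def wCode (m : ℕ) : Set (Fin m → Fin 2) :=
  {α | wt α = (m+1)/2 ∨ wt α = (m-1)/2}

/-- The code `W([m/2],2)` over a general alphabet (used when `q = 2`): vertices in which
one letter occurs `(m+1)/2` times and another `(m-1)/2` times. -/
def wCodeGen (m q : ℕ) : Set (Fin m → Fin q) :=
  {α | ∃ a b : Fin q, a ≠ b ∧ cnt α a = (m+1)/2 ∧ cnt α b = (m-1)/2}

end Weight

section PermCodes

/-- The vertex `α(g) = (1^g, …, q^g)` of `H(q,q)` associated with a permutation `g`. -/
def alphaVtx {q : ℕ} (g : Equiv.Perm (Fin q)) : Fin q → Fin q := fun i => g i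

/-- The permutation code generated by a set `T` of permutations. -/
def permCode {q : ℕ} (T : Set (Equiv.Perm (Fin q))) : Set (Fin q → Fin q) :=
  alphaVtx '' T

end PermCodes

section Repetition

variable {I : Type*} [Fintype I] [DecidableEq I] {q : ℕ}

/-- The `p`-fold repetition `rep_p(α) = (α,…,α)`, a vertex of `H(p·|I|, q)`. -/
def repv (p : ℕ) (α : I → Fin q) : Fin p × I → Fin q := fun ji => α ji.2

/-- The `p`-fold repetition code `Rep_p(C)`. -/
def repCodeP (p : ℕ) (C : Set (I → Fin q)) : Set (Fin p × I → Fin q) :=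
  repv p '' C

/-- The homomorphism `Sym(V(H(I,q))) × S_p → Sym(V(H(p·|I|,q)))`: the pair `(x,σ)` acts on
`p`-tuples of vertices by `(α_1,…,α_p) ↦ (α_{σ⁻¹(1)}^x, …, α_{σ⁻¹(p)}^x)`. -/
def repHom (p : ℕ) (I : Type*) [Fintype I] [DecidableEq I] (q : ℕ) :
    Equiv.Perm (I → Fin q) × Equiv.Perm (Fin p) →* Equiv.Perm (Fin p × I → Fin q) where
  toFun x :=
    { toFun := fun β ji => x.1 (fun i => β (x.2⁻¹ ji.1, i)) ji.2
      invFun := fun β ji => x.1⁻¹ (fun i => β (x.2 ji.1, i)) ji.2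
      left_inv := by intro β; funext ji; simp
      right_inv := by intro β; funext ji; simp }
  map_one' := by ext β ji; simp
  map_mul' x y := by ext β ji; simp [mul_inv_rev]

end Repetition

/-!
If the distance partition of `C` is equitable, every vertex of `C_i`, `i < ρ`, has a neighbour
in `C_{i+1}`; climbing from `γ` gives `d(γ, C_ρ) = ρ - d(γ, C)`, so the distance partition of
`C_ρ` is that of `C` reversed. The statements about automorphisms and complete transitivity
follow, since automorphisms of `H(m,q)` preserve Hamming distance.

The rest is one double count. For a set `S` of vertices, counting the pairs (neighbour `δ` of
`γ`, `β ∈ S` with `d(δ, β) = t`) from the side of `β` gives `∑_{s ≤ t+1} N_s(γ) p_{s,t}`, where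
`N_s(γ)` is the number of `β ∈ S` at distance `s` from `γ` and `p_{s,t}` is an intersection
number of `H(m,q)`, with `p_{t+1,t} = t + 1`. For `S = C` and `C` completely regular this depends
only on the cell of `γ`, while counting from the side of `δ` is triangular in the numbers of
neighbours of `γ` in `C_0, …, C_t`: so the partition is equitable. If the partition is equitable
and `S` is a union of cells, induction on `t` shows that `N_t(γ)` depends only on the cell of
`γ`; for `S = C_ρ` this is the complete regularity of `C_ρ`.
-/

open Finset Function

theorem Finset.sum_comp_eq_sum_card_filter_smul {α β M : Type*} [DecidableEq β] [AddCommMonoid M]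
    {s : Finset α} {t : Finset β} {f : α → β} {g : β → M}
    (h : ∀ x ∈ s, g (f x) ≠ 0 → f x ∈ t) :
    ∑ x ∈ s, g (f x) = ∑ b ∈ t, #{x ∈ s | f x = b} • g b := by
  rw [← sum_filter_of_ne h, ← sum_fiberwise_of_maps_to' fun x hx => (mem_filter.1 hx).2]
  refine sum_congr rfl fun b hb => ?_
  rw [sum_const, filter_filter]
  congr 2
  exact filter_congr fun x _ => ⟨And.right, fun hx => ⟨hx ▸ hb, hx⟩⟩

lemma card_fin_ne_and_ne {q : ℕ} {b c : Fin q} (h : b ≠ c) :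
    #{a : Fin q | a ≠ b ∧ a ≠ c} = q - 2 := by
  have : ({a : Fin q | a ≠ b ∧ a ≠ c} : Finset (Fin q)) = (univ.erase b).erase c := by
    ext a
    simp [and_comm]
  rw [this, card_erase_of_mem (by simpa using h.symm), card_erase_of_mem (mem_univ b), card_univ,
    Fintype.card_fin]
  omega

section DistanceToCode

variable {I : Type*} [Fintype I] {q : ℕ} {C : Set (I → Fin q)}

lemma exists_hammingDist_eq_sub {γ β : I → Fin q} {j : ℕ} (hj : j ≤ hammingDist γ β) :
    ∃ γ', hammingDist γ γ' = hammingDist γ β - j ∧ hammingDist γ' β = j := by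
  classical
  obtain ⟨T, hTD, hT⟩ := exists_subset_card_eq (s := {i | γ i ≠ β i}) (n := hammingDist γ β - j)
    (Nat.sub_le _ _)
  refine ⟨fun i => if i ∈ T then β i else γ i, ?_, ?_⟩
  · rw [← hT, hammingDist]
    congr 1
    ext i
    by_cases hi : i ∈ T
    · simpa [hi] using hTD hi
    · simp [hi]
  · have hD : #{i | γ i ≠ β i} = hammingDist γ β := rfl
    rw [hammingDist, ← Nat.sub_sub_self hj, ← hT, ← hD, ← card_sdiff_of_subset hTD]
    congr 1
    ext i
    by_cases hi : i ∈ T <;> simp [hi]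

lemma distC_le_hammingDist {γ β : I → Fin q} (hβ : β ∈ C) : distC γ C ≤ hammingDist γ β :=
  Nat.sInf_le ⟨β, hβ, rfl⟩

lemma exists_hammingDist_eq_distC (hC : C.Nonempty) (γ : I → Fin q) :
    ∃ β ∈ C, hammingDist γ β = distC γ C :=
  Nat.sInf_mem (hC.image (hammingDist γ))

lemma distC_eq_zero_iff (hC : C.Nonempty) {γ : I → Fin q} : distC γ C = 0 ↔ γ ∈ C := by
  refine ⟨fun h => ?_, fun h => Nat.eq_zero_of_le_zero ?_⟩
  · obtain ⟨β, hβ, hd⟩ := exists_hammingDist_eq_distC hC γ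
    rwa [hammingDist_eq_zero.1 (hd.trans h)]
  · simpa using distC_le_hammingDist (γ := γ) h

lemma cell_zero (hC : C.Nonempty) : cell C 0 = C :=
  Set.ext fun _ => distC_eq_zero_iff hC

lemma distC_le_hammingDist_add (hC : C.Nonempty) (γ γ' : I → Fin q) :
    distC γ C ≤ hammingDist γ γ' + distC γ' C := by
  obtain ⟨β, hβ, hd⟩ := exists_hammingDist_eq_distC hC γ'
  exact (distC_le_hammingDist hβ).trans (hd ▸ hammingDist_triangle γ γ' β)

lemma bddAbove_distC (hC : C.Nonempty) : BddAbove {d | ∃ γ : I → Fin q, distC γ C = d} := by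
  obtain ⟨β, hβ⟩ := hC
  refine ⟨Fintype.card I, ?_⟩
  rintro _ ⟨γ, rfl⟩
  exact (distC_le_hammingDist hβ).trans hammingDist_le_card_fintype

lemma distC_le_covRad (hC : C.Nonempty) (γ : I → Fin q) : distC γ C ≤ covRad C :=
  le_csSup (bddAbove_distC hC) ⟨γ, rfl⟩

lemma exists_distC_eq_covRad (hC : C.Nonempty) : ∃ γ : I → Fin q, distC γ C = covRad C :=
  Nat.sSup_mem (s := {d | ∃ γ : I → Fin q, distC γ C = d}) ⟨_, hC.some, rfl⟩
    (bddAbove_distC hC)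

lemma covRad_eq {r : ℕ} (hle : ∀ γ, distC γ C ≤ r) (hr : ∃ γ, distC γ C = r) : covRad C = r :=
  IsGreatest.csSup_eq ⟨hr, by rintro _ ⟨γ, rfl⟩; exact hle γ⟩

lemma exists_hammingDist_eq_sub_distC_eq (hC : C.Nonempty) {γ : I → Fin q} {j : ℕ}
    (hj : j ≤ distC γ C) : ∃ γ', hammingDist γ γ' = distC γ C - j ∧ distC γ' C = j := by
  obtain ⟨β, hβ, hd⟩ := exists_hammingDist_eq_distC hC γ
  obtain ⟨γ', hγγ', hγ'β⟩ := exists_hammingDist_eq_sub (hd ▸ hj)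
  have := distC_le_hammingDist_add hC γ γ'
  have := distC_le_hammingDist (γ := γ') hβ
  exact ⟨γ', hd ▸ hγγ', by omega⟩

lemma cell_nonempty (hC : C.Nonempty) {i : ℕ} (hi : i ≤ covRad C) : (cell C i).Nonempty := by
  obtain ⟨γ, hγ⟩ := exists_distC_eq_covRad hC
  obtain ⟨γ', -, hγ'⟩ := exists_hammingDist_eq_sub_distC_eq hC (hγ ▸ hi)
  exact ⟨γ', hγ'⟩

noncomputable def distCount (S : Set (I → Fin q)) (γ : I → Fin q) (k : ℕ) : ℕ :=
  {β ∈ S | hammingDist γ β = k}.ncard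

lemma distCount_zero (S : Set (I → Fin q)) [DecidablePred (· ∈ S)] (γ : I → Fin q) :
    distCount S γ 0 = if γ ∈ S then 1 else 0 := by
  have : {β ∈ S | hammingDist γ β = 0} = if γ ∈ S then {γ} else ∅ := by
    ext β
    split_ifs <;> grind [hammingDist_eq_zero]
  rw [distCount, this]
  split_ifs <;> simp

lemma distCount_eq_zero_of_lt (γ : I → Fin q) {k : ℕ} (hk : k < distC γ C) :
    distCount C γ k = 0 := by
  rw [distCount, Set.ncard_eq_zero]
  exact Set.eq_empty_of_forall_notMem fun β ⟨hβ, hd⟩ => (distC_le_hammingDist hβ).not_gt (hd ▸ hk)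

lemma distCount_distC_pos (hC : C.Nonempty) (γ : I → Fin q) : 0 < distCount C γ (distC γ C) :=
  (Set.ncard_pos (Set.toFinite _)).2 (exists_hammingDist_eq_distC hC γ)

lemma ComplRegular.factorsThrough (hC : C.Nonempty) (hcr : ComplRegular C) (k : ℕ) :
    FactorsThrough (distCount C · k) (distC · C) :=
  fun γ γ' h => hcr _ (distC_le_covRad hC γ) γ rfl γ' h.symm k

end DistanceToCode

section Neighbours

variable {I : Type*} [Fintype I] [DecidableEq I] {q : ℕ}

def nbrs (γ : I → Fin q) : Finset (I → Fin q) :=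
  {δ | hammingDist γ δ = 1}

lemma mem_nbrs {γ δ : I → Fin q} : δ ∈ nbrs γ ↔ hammingDist γ δ = 1 := by
  simp [nbrs]

lemma mem_nbrs_comm {γ δ : I → Fin q} : δ ∈ nbrs γ ↔ γ ∈ nbrs δ := by
  simp [mem_nbrs, hammingDist_comm]

lemma hammingDist_update_add (γ β : I → Fin q) (i : I) (a : Fin q) :
    hammingDist (update γ i a) β + (if γ i ≠ β i then 1 else 0)
      = hammingDist γ β + (if a ≠ β i then 1 else 0) := by
  simp only [hammingDist, card_filter, ← add_sum_erase _ _ (mem_univ i), update_self]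
  have hrest : ∑ j ∈ univ.erase i, (if update γ i a j ≠ β j then 1 else 0)
      = ∑ j ∈ univ.erase i, (if γ j ≠ β j then 1 else 0) :=
    sum_congr rfl fun j hj => by rw [update_of_ne (ne_of_mem_erase hj)]
  rw [hrest]
  ring

lemma hammingDist_update_self (γ : I → Fin q) (i : I) (a : Fin q) :
    hammingDist γ (update γ i a) = if a ≠ γ i then 1 else 0 := by
  simpa [hammingDist_comm] using hammingDist_update_add γ γ i a

lemma card_filter_nbrs (γ : I → Fin q) (P : (I → Fin q) → Prop) [DecidablePred P] :
    #{δ ∈ nbrs γ | P δ} = ∑ i, #{a | a ≠ γ i ∧ P (update γ i a)} := by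
  rw [← card_sigma]
  symm
  refine card_bij (fun x _ => update γ x.1 x.2) ?_ ?_ ?_
  · rintro ⟨i, a⟩ hx
    simp only [mem_sigma, mem_univ, mem_filter, true_and] at hx
    simp [mem_nbrs, hammingDist_update_self, hx.1, hx.2]
  · rintro ⟨i, a⟩ hx ⟨j, b⟩ hy hxy
    simp only [mem_sigma, mem_univ, mem_filter, true_and] at hx hy
    obtain rfl : i = j := by
      by_contra hij
      have := congrFun hxy i
      rw [update_self, update_of_ne hij] at this
      exact hx.1 this
    simpa using congrFun hxy i
  · intro δ hδ
    simp only [mem_filter, mem_nbrs] at hδ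
    obtain ⟨i, hi⟩ := card_eq_one.1 hδ.1
    have hδi : ∀ j, γ j ≠ δ j ↔ j = i := fun j => by
      simpa using congrArg (j ∈ ·) hi
    have hupd : update γ i (δ i) = δ := by
      funext j
      by_cases hj : j = i
      · subst hj; simp
      · rw [update_of_ne hj]; exact not_not.1 fun h => hj ((hδi j).1 h)
    refine ⟨⟨i, δ i⟩, ?_, hupd⟩
    simp only [mem_sigma, mem_univ, mem_filter, true_and, hupd]
    exact ⟨Ne.symm ((hδi i).2 rfl), hδ.2⟩

lemma card_filter_update_hammingDist (γ β : I → Fin q) (i : I) (t : ℕ) :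
    #{a | a ≠ γ i ∧ hammingDist (update γ i a) β = t} =
      if γ i = β i then (if t = hammingDist γ β + 1 then q - 1 else 0)
      else (if t + 1 = hammingDist γ β then 1 else 0) +
        if t = hammingDist γ β then q - 2 else 0 := by
  have key := hammingDist_update_add γ β i
  set s := hammingDist γ β
  by_cases hi : γ i = β i
  · have hd : ∀ a, a ≠ γ i → hammingDist (update γ i a) β = s + 1 := fun a ha => by
      simpa [hi, hi ▸ ha] using key a
    rw [if_pos hi, filter_congr fun a _ => and_congr_right fun ha => by rw [hd a ha, eq_comm]]
    split_ifs with ht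
    · simp only [ht, and_true]
      rw [filter_ne', card_erase_of_mem (mem_univ _), card_univ, Fintype.card_fin]
    · simp [ht]
  · have hd : ∀ a, hammingDist (update γ i a) β + 1 = s + if a ≠ β i then 1 else 0 := fun a => by
      simpa [hi] using key a
    rw [if_neg hi]
    by_cases h1 : t + 1 = s
    · rw [if_pos h1, if_neg (by omega), add_zero, card_eq_one]
      refine ⟨β i, ext fun a => ?_⟩
      have := hd a
      by_cases ha : a = β i <;> simp [ha, Ne.symm hi] at this ⊢ <;> omega
    by_cases h2 : t = s
    · rw [if_neg h1, if_pos h2, zero_add, ← card_fin_ne_and_ne hi]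
      congr 1
      refine filter_congr fun a _ => and_congr_right fun _ => ?_
      have := hd a
      by_cases ha : a = β i <;> simp [ha] at this ⊢ <;> omega
    · rw [if_neg h1, if_neg h2, card_eq_zero, filter_eq_empty_iff]
      rintro a - ⟨-, ht⟩
      have := hd a
      split_ifs at this <;> omega

/-- In `H(m,q)`, with `d(γ,β) = s`, the neighbours of `γ` at distance `t` from `β` come from
changing one of the `m - s` coordinates where `γ` and `β` agree (`t = s + 1`), or one of the `s`
others either to the letter of `β` (`t = s - 1`) or to a third letter (`t = s`). -/
def intersectionNumber (m q s t : ℕ) : ℕ :=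
  (m - s) * (if t = s + 1 then q - 1 else 0) +
    s * ((if t + 1 = s then 1 else 0) + if t = s then q - 2 else 0)

lemma card_filter_nbrs_hammingDist (γ β : I → Fin q) (t : ℕ) :
    #{δ ∈ nbrs γ | hammingDist δ β = t} =
      intersectionNumber (Fintype.card I) q (hammingDist γ β) t := by
  have hagree : #{i | γ i = β i} = Fintype.card I - hammingDist γ β := by
    have := card_filter_add_card_filter_not (s := univ) fun i => γ i = β i
    rw [card_univ] at this
    exact Nat.eq_sub_of_add_eq this
  rw [card_filter_nbrs, sum_congr rfl fun i _ => card_filter_update_hammingDist γ β i t, sum_ite,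
    sum_const, sum_const, smul_eq_mul, smul_eq_mul, hagree, intersectionNumber]
  rfl

lemma intersectionNumber_eq_zero {m q s t : ℕ} (h : t + 1 < s) :
    intersectionNumber m q s t = 0 := by
  simp only [intersectionNumber]
  rw [if_neg (by omega), if_neg (by omega), if_neg (by omega)]
  simp

lemma intersectionNumber_succ_self (m q t : ℕ) : intersectionNumber m q (t + 1) t = t + 1 := by
  simp [intersectionNumber]
  omega

lemma sum_distCount_nbrs (S : Set (I → Fin q)) (γ : I → Fin q) (t : ℕ) :
    ∑ δ ∈ nbrs γ, distCount S δ t =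
      ∑ s ∈ range (t + 2), distCount S γ s * intersectionNumber (Fintype.card I) q s t := by
  classical
  set S' : Finset (I → Fin q) := {β | β ∈ S}
  have hS' : ∀ δ k, distCount S δ k = #{β ∈ S' | hammingDist δ β = k} := fun δ k => by
    rw [distCount, ← Set.ncard_coe_finset]
    congr 1
    ext
    simp [S']
  calc ∑ δ ∈ nbrs γ, distCount S δ t
      = ∑ β ∈ S', #{δ ∈ nbrs γ | hammingDist δ β = t} := by
        simp only [hS']
        exact sum_card_bipartiteAbove_eq_sum_card_bipartiteBelow _
    _ = ∑ β ∈ S', intersectionNumber (Fintype.card I) q (hammingDist γ β) t :=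
        sum_congr rfl fun β _ => card_filter_nbrs_hammingDist γ β t
    _ = _ := by
        rw [sum_comp_eq_sum_card_filter_smul (f := hammingDist γ) (t := range (t + 2))
          (g := (intersectionNumber (Fintype.card I) q · t)) fun β _ h => mem_range.2 ?_]
        · simp only [hS', smul_eq_mul]
        · by_contra h'
          exact h (intersectionNumber_eq_zero (by omega))

lemma exists_mem_nbrs_distC_eq {C : Set (I → Fin q)} (hC : C.Nonempty) {δ : I → Fin q} {i : ℕ}
    (hδ : distC δ C = i + 1) : ∃ γ ∈ nbrs δ, distC γ C = i := by
  obtain ⟨γ, hδγ, hγ⟩ := exists_hammingDist_eq_sub_distC_eq hC (γ := δ) (j := i) (by omega)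
  exact ⟨γ, mem_nbrs.2 (by omega), hγ⟩

end Neighbours

section Equitable

variable {I : Type*} [Fintype I] [DecidableEq I] {q : ℕ} {C : Set (I → Fin q)}

def DistPartitionEquitable (C : Set (I → Fin q)) : Prop :=
  ∀ j, FactorsThrough (fun γ => #{δ ∈ nbrs γ | distC δ C = j}) (distC · C)

lemma sum_nbrs_eq_sum_range_card_mul {h : (I → Fin q) → ℕ} (hh : FactorsThrough h (distC · C))
    {n : ℕ} (hn : ∀ δ, h δ ≠ 0 → distC δ C < n) (γ : I → Fin q) :
    ∑ δ ∈ nbrs γ, h δ =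
      ∑ j ∈ range n, #{δ ∈ nbrs γ | distC δ C = j} * extend (distC · C) h 0 j := by
  calc ∑ δ ∈ nbrs γ, h δ = ∑ δ ∈ nbrs γ, extend (distC · C) h 0 (distC δ C) :=
        sum_congr rfl fun δ _ => (hh.extend_apply 0 δ).symm
    _ = _ := by
        rw [sum_comp_eq_sum_card_filter_smul fun δ _ hδ => mem_range.2 (hn δ ?_)]
        · simp only [smul_eq_mul]
        · rwa [hh.extend_apply] at hδ

theorem ComplRegular.distPartitionEquitable (hC : C.Nonempty) (hcr : ComplRegular C) :
    DistPartitionEquitable C := by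
  intro t γ γ' hγγ'
  induction t using Nat.strong_induction_on with
  | _ t ih =>
  dsimp only at hγγ' ih ⊢
  have hN := hcr.factorsThrough hC t
  have hn : ∀ δ, distCount C δ t ≠ 0 → distC δ C < t + 1 := fun δ h => by
    by_contra h'
    exact h (distCount_eq_zero_of_lt δ (by omega))
  have key : ∑ j ∈ range (t + 1),
        #{δ ∈ nbrs γ | distC δ C = j} * extend (distC · C) (distCount C · t) 0 j
      = ∑ j ∈ range (t + 1),
        #{δ ∈ nbrs γ' | distC δ C = j} * extend (distC · C) (distCount C · t) 0 j := by
    rw [← sum_nbrs_eq_sum_range_card_mul hN hn, ← sum_nbrs_eq_sum_range_card_mul hN hn,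
      sum_distCount_nbrs, sum_distCount_nbrs]
    exact sum_congr rfl fun s _ => by
      rw [show distCount C γ s = distCount C γ' s from hcr.factorsThrough hC s hγγ']
  rw [sum_range_succ, sum_range_succ, sum_congr rfl fun j hj => by rw [ih j (mem_range.1 hj)]]
    at key
  have key' := Nat.add_left_cancel key
  by_cases ht : ∃ δ, distC δ C = t
  · obtain ⟨δ, rfl⟩ := ht
    refine Nat.eq_of_mul_eq_mul_right ?_ key'
    rw [hN.extend_apply]
    exact distCount_distC_pos hC δ
  · simp [not_exists.1 ht]

namespace DistPartitionEquitable

theorem distCount_factorsThrough (hC : C.Nonempty) (heq : DistPartitionEquitable C)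
    {S : Set (I → Fin q)} (hS : FactorsThrough (· ∈ S) (distC · C)) (k : ℕ) :
    FactorsThrough (distCount S · k) (distC · C) := by
  induction k using Nat.strong_induction_on with
  | _ k ih =>
  intro γ γ' hγγ'
  dsimp only at hγγ' ⊢
  cases k with
  | zero =>
    classical
    simp only [distCount_zero, show (γ ∈ S) = (γ' ∈ S) from hS hγγ']
  | succ k =>
    have hN := ih k k.lt_succ_self
    have hn : ∀ δ, distCount S δ k ≠ 0 → distC δ C < covRad C + 1 :=
      fun δ _ => Nat.lt_succ_of_le (distC_le_covRad hC δ)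
    have key : ∑ s ∈ range (k + 2), distCount S γ s * intersectionNumber (Fintype.card I) q s k
        = ∑ s ∈ range (k + 2), distCount S γ' s * intersectionNumber (Fintype.card I) q s k := by
      rw [← sum_distCount_nbrs, ← sum_distCount_nbrs, sum_nbrs_eq_sum_range_card_mul hN hn,
        sum_nbrs_eq_sum_range_card_mul hN hn]
      exact sum_congr rfl fun j _ => by
        rw [show #{δ ∈ nbrs γ | distC δ C = j} = #{δ ∈ nbrs γ' | distC δ C = j} from heq j hγγ']
    rw [sum_range_succ _ (k + 1), sum_range_succ _ (k + 1), intersectionNumber_succ_self,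
      sum_congr rfl fun s hs => by
        rw [show distCount S γ s = distCount S γ' s from ih s (mem_range.1 hs) hγγ']] at key
    exact Nat.eq_of_mul_eq_mul_right k.succ_pos (Nat.add_left_cancel key)

lemma exists_mem_nbrs_distC_succ (hC : C.Nonempty) (heq : DistPartitionEquitable C)
    {γ : I → Fin q} (hγ : distC γ C < covRad C) : ∃ δ ∈ nbrs γ, distC δ C = distC γ C + 1 := by
  obtain ⟨δ₀, hδ₀⟩ := cell_nonempty hC (show distC γ C + 1 ≤ covRad C by omega)
  obtain ⟨γ₀, hγ₀δ₀, hγ₀⟩ := exists_mem_nbrs_distC_eq hC hδ₀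
  have hpos : 0 < #{δ ∈ nbrs γ₀ | distC δ C = distC γ C + 1} :=
    card_pos.2 ⟨δ₀, mem_filter.2 ⟨mem_nbrs_comm.1 hγ₀δ₀, hδ₀⟩⟩
  rw [show #{δ ∈ nbrs γ₀ | distC δ C = distC γ C + 1} = #{δ ∈ nbrs γ | distC δ C = distC γ C + 1}
    from heq _ hγ₀] at hpos
  obtain ⟨δ, hδ⟩ := card_pos.1 hpos
  exact ⟨δ, mem_filter.1 hδ⟩

lemma exists_hammingDist_le_distC_eq_add (hC : C.Nonempty) (heq : DistPartitionEquitable C)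
    (γ : I → Fin q) {k : ℕ} (hk : distC γ C + k ≤ covRad C) :
    ∃ δ, hammingDist γ δ ≤ k ∧ distC δ C = distC γ C + k := by
  induction k with
  | zero => exact ⟨γ, by simp⟩
  | succ k ih =>
    obtain ⟨δ, hγδ, hδ⟩ := ih (by omega)
    obtain ⟨δ', hδδ', hδ'⟩ := heq.exists_mem_nbrs_distC_succ hC (show distC δ C < covRad C by omega)
    have := hammingDist_triangle γ δ δ'
    exact ⟨δ', by rw [mem_nbrs] at hδδ'; omega, by omega⟩

theorem distC_cell_covRad (hC : C.Nonempty) (heq : DistPartitionEquitable C) (γ : I → Fin q) :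
    distC γ (cell C (covRad C)) = covRad C - distC γ C := by
  have := distC_le_covRad hC γ
  obtain ⟨δ, hγδ, hδ⟩ := heq.exists_hammingDist_le_distC_eq_add hC γ (k := covRad C - distC γ C)
    (by omega)
  have hδ : δ ∈ cell C (covRad C) := show distC δ C = covRad C by omega
  obtain ⟨δ', hδ', hγδ'⟩ := exists_hammingDist_eq_distC ⟨δ, hδ⟩ γ
  have hle := distC_le_hammingDist (γ := γ) hδ
  have hge := distC_le_hammingDist_add hC δ' γ
  have hδ'ρ : distC δ' C = covRad C := hδ'
  rw [hammingDist_comm] at hge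
  omega

lemma cell_cell_covRad (hC : C.Nonempty) (heq : DistPartitionEquitable C) {i : ℕ}
    (hi : i ≤ covRad C) : cell (cell C (covRad C)) i = cell C (covRad C - i) := by
  ext γ
  have := distC_le_covRad hC γ
  change distC γ _ = i ↔ distC γ C = covRad C - i
  rw [heq.distC_cell_covRad hC]
  omega

lemma covRad_cell_covRad (hC : C.Nonempty) (heq : DistPartitionEquitable C) :
    covRad (cell C (covRad C)) = covRad C := by
  refine covRad_eq (fun γ => by rw [heq.distC_cell_covRad hC]; omega) ⟨hC.some, ?_⟩
  rw [heq.distC_cell_covRad hC, (distC_eq_zero_iff hC).2 hC.some_mem, Nat.sub_zero]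

lemma complTransitive_iff_cell_covRad (hC : C.Nonempty) (heq : DistPartitionEquitable C)
    (X : Subgroup (Equiv.Perm (I → Fin q))) :
    ComplTransitive X C ↔ ComplTransitive X (cell C (covRad C)) := by
  unfold ComplTransitive
  rw [heq.covRad_cell_covRad hC]
  refine and_congr_right fun _ => ⟨fun h i hi => ?_, fun h i hi => ?_⟩
  · rw [heq.cell_cell_covRad hC hi]
    exact h _ (Nat.sub_le _ _)
  · simpa [heq.cell_cell_covRad hC (Nat.sub_le _ i), Nat.sub_sub_self hi] using
      h (covRad C - i) (Nat.sub_le _ _)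

end DistPartitionEquitable

theorem ComplRegular.cell_covRad (hC : C.Nonempty) (hcr : ComplRegular C) :
    ComplRegular (cell C (covRad C)) := by
  have heq := hcr.distPartitionEquitable hC
  intro i hi γ hγ γ' hγ' k
  rw [heq.covRad_cell_covRad hC] at hi
  rw [heq.cell_cell_covRad hC hi] at hγ hγ'
  exact heq.distCount_factorsThrough hC (fun a b (hab : distC a C = distC b C) =>
      show (distC a C = covRad C) = (distC b C = covRad C) by rw [hab]) k
    ((hγ : distC γ C = _).trans hγ'.symm)

end Equitable

section Automorphisms

variable {I : Type*} [Fintype I] [DecidableEq I] {q : ℕ}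

lemma hammingDist_apply_le_of_mem_autH {x : Equiv.Perm (I → Fin q)} (hx : x ∈ autH I q)
    (α β : I → Fin q) : hammingDist (x α) (x β) ≤ hammingDist α β := by
  induction h : hammingDist α β generalizing α with
  | zero => simp [hammingDist_eq_zero.1 h]
  | succ k ih =>
    obtain ⟨α', hαα', hα'β⟩ := exists_hammingDist_eq_sub (γ := α) (β := β) (j := k) (by omega)
    have hstep : hammingDist (x α) (x α') = 1 := (hx α α').2 (by omega)
    have := hammingDist_triangle (x α) (x α') (x β)
    have := ih α' hα'β
    omega

lemma hammingDist_apply_of_mem_autH {x : Equiv.Perm (I → Fin q)} (hx : x ∈ autH I q)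
    (α β : I → Fin q) : hammingDist (x α) (x β) = hammingDist α β := by
  refine le_antisymm (hammingDist_apply_le_of_mem_autH hx α β) ?_
  simpa using hammingDist_apply_le_of_mem_autH ((autH I q).inv_mem hx) (x α) (x β)

lemma Equiv.Perm.smul_set_eq_self_iff {α : Type*} {x : Equiv.Perm α} {T : Set α} :
    x • T = T ↔ ∀ a, x a ∈ T ↔ a ∈ T := by
  refine ⟨fun h a => ?_, fun h => Set.ext fun a => ?_⟩
  · conv_lhs => rw [← h]
    exact Set.smul_mem_smul_set_iff
  · rw [Set.mem_smul_set_iff_inv_smul_mem, ← h]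
    simp

lemma distC_apply_of_mem_autH {x : Equiv.Perm (I → Fin q)} (hx : x ∈ autH I q)
    {D : Set (I → Fin q)} (hxD : x • D = D) (γ : I → Fin q) : distC (x γ) D = distC γ D := by
  have hmem := Equiv.Perm.smul_set_eq_self_iff.1 hxD
  unfold distC
  congr 1
  ext d
  refine ⟨fun ⟨β, hβ, hd⟩ => ⟨x⁻¹ β, ?_, ?_⟩, fun ⟨β, hβ, hd⟩ => ⟨x β, (hmem β).2 hβ, ?_⟩⟩
  · exact (hmem (x⁻¹ β)).1 (by simpa using hβ)
  · rw [← hd, ← hammingDist_apply_of_mem_autH hx]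
    simp
  · rw [hammingDist_apply_of_mem_autH hx, hd]

lemma smul_cell_eq_of_mem_autH {x : Equiv.Perm (I → Fin q)} (hx : x ∈ autH I q)
    {D : Set (I → Fin q)} (hxD : x • D = D) (i : ℕ) : x • cell D i = cell D i :=
  Equiv.Perm.smul_set_eq_self_iff.2 fun γ => by
    change distC (x γ) D = i ↔ distC γ D = i
    rw [distC_apply_of_mem_autH hx hxD]

lemma DistPartitionEquitable.autCode_cell_covRad {C : Set (I → Fin q)} (hC : C.Nonempty)
    (heq : DistPartitionEquitable C) : autCode C = autCode (cell C (covRad C)) := by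
  ext x
  simp only [autCode, Subgroup.mem_inf, MulAction.mem_stabilizer_iff]
  refine and_congr_right fun hx => ⟨fun h => smul_cell_eq_of_mem_autH hx h _, fun h => ?_⟩
  simpa [heq.cell_cell_covRad hC le_rfl, cell_zero hC] using
    smul_cell_eq_of_mem_autH hx h (covRad C)

end Automorphisms

theorem completely_regular_last_cell_general {m q : ℕ}
    (C : Set (Fin m → Fin q)) (hC : C.Nonempty) (hcr : ComplRegular C) :
    ComplRegular (cell C (covRad C)) ∧
    covRad (cell C (covRad C)) = covRad C ∧
    (∀ i ≤ covRad C, cell (cell C (covRad C)) i = cell C (covRad C - i)) ∧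
    autCode C = autCode (cell C (covRad C)) ∧
    (∀ X : Subgroup (Equiv.Perm (Fin m → Fin q)),
      ComplTransitive X C ↔ ComplTransitive X (cell C (covRad C))) := by
  have heq := hcr.distPartitionEquitable hC
  exact ⟨hcr.cell_covRad hC, heq.covRad_cell_covRad hC, fun i hi => heq.cell_cell_covRad hC hi,
    heq.autCode_cell_covRad hC, heq.complTransitive_iff_cell_covRad hC⟩

/-- Lemma 2.7: if `C` is completely regular with covering radius `ρ`,
then `C_ρ` is completely regular with the reversed distance partition,
`Aut(C) = Aut(C_ρ)`, and `C` is `X`-completely transitive iff `C_ρ` is. -/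
theorem completely_regular_last_cell {m q : ℕ} (hm : 2 ≤ m) (hq : 2 ≤ q)
    (C : Set (Fin m → Fin q)) (hC : C.Nonempty) (hcr : ComplRegular C) :
    ComplRegular (cell C (covRad C)) ∧
    covRad (cell C (covRad C)) = covRad C ∧
    (∀ i ≤ covRad C, cell (cell C (covRad C)) i = cell C (covRad C - i)) ∧
    autCode C = autCode (cell C (covRad C)) ∧
    (∀ X : Subgroup (Equiv.Perm (Fin m → Fin q)),
      ComplTransitive X C ↔ ComplTransitive X (cell C (covRad C))) :=
  completely_regular_last_cell_general C hC hcr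
end

section
/- Let C be an X-neighbour transitive code in H(m,q) with minimum distance δ ≥ 2 such that for some codeword α ∈ C the stabiliser X_α acts transitively on the set Γ_1(α) of vertices at Hamming distance 1 from α. Then for every positive integer p, the p-fold repetition code Rep_p(C) is (X × S_p)-neighbour transitive in H(mp,q). -/
open Equiv Pointwise

/-! A neighbour of `rep_p(β)` is `rep_p(β)` with a single block replaced by a neighbour `μ`
of `β`; as `δ ≥ 2`, such a vertex is never a codeword, so these vertices form `Rep_p(C)_1`.
Transitivity of `X` on `C` and of `X_α` on `Γ_1(α)` make `X` transitive on the pairs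
`(β, μ)`, and `S_p` moves the modified block to any position, so `X × S_p` is transitive on
`Rep_p(C)_1`. Adjacency in `H(mp,q)` is checked block by block, which also shows that
`X × S_p` acts by automorphisms. -/

open Function

section Hamming

variable {ι κ β : Type*} [Fintype ι] [Fintype κ] [DecidableEq β]

theorem Fintype.nat_sum_eq_one_iff {d : κ → ℕ} :
    ∑ j, d j = 1 ↔ ∃ j, d j = 1 ∧ ∀ j' ≠ j, d j' = 0 := by
  classical
  constructor
  · intro h
    obtain ⟨j, -, hj⟩ := Finset.exists_ne_zero_of_sum_ne_zero (h ▸ one_ne_zero)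
    rw [← Finset.add_sum_erase _ _ (Finset.mem_univ j)] at h
    have hrest : ∑ j' ∈ Finset.univ.erase j, d j' = 0 := by omega
    refine ⟨j, by omega, fun j' hj' => Finset.sum_eq_zero_iff.mp hrest j' ?_⟩
    exact Finset.mem_erase.mpr ⟨hj', Finset.mem_univ j'⟩
  · rintro ⟨j, hj, hrest⟩
    rw [Fintype.sum_eq_single j hrest, hj]

theorem hammingDist_uncurry (f g : κ → ι → β) :
    hammingDist (uncurry f) (uncurry g) = ∑ j, hammingDist (f j) (g j) := by
  simp only [hammingDist, Finset.card_filter]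
  exact Fintype.sum_prod_type _

theorem hammingDist_uncurry_eq_one_iff {f g : κ → ι → β} :
    hammingDist (uncurry f) (uncurry g) = 1 ↔
      ∃ j, hammingDist (f j) (g j) = 1 ∧ ∀ j' ≠ j, f j' = g j' := by
  simp only [hammingDist_uncurry, Fintype.nat_sum_eq_one_iff, hammingDist_eq_zero]

theorem hammingDist_uncurry_comp_equiv (f g : κ → ι → β) (e : κ ≃ κ) :
    hammingDist (uncurry (f ∘ e)) (uncurry (g ∘ e)) = hammingDist (uncurry f) (uncurry g) := by
  simp only [hammingDist_uncurry, comp_apply]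
  exact e.sum_comp fun j => hammingDist (f j) (g j)

theorem hammingDist_uncurry_const_eq_one_iff [DecidableEq κ] {ν : κ × ι → β} {b : ι → β} :
    hammingDist ν (uncurry fun _ => b) = 1 ↔
      ∃ j μ, hammingDist μ b = 1 ∧ ν = uncurry (update (fun _ => b) j μ) := by
  constructor
  · intro h
    rw [← uncurry_curry ν, hammingDist_uncurry_eq_one_iff] at h
    obtain ⟨j, hj, hrest⟩ := h
    refine ⟨j, curry ν j, hj, ?_⟩
    conv_lhs => rw [← uncurry_curry ν]
    congr 1
    funext j'
    rcases eq_or_ne j' j with rfl | hj'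
    · simp
    · simp [hj', hrest j' hj']
  · rintro ⟨j, μ, hμ, rfl⟩
    rw [hammingDist_uncurry_eq_one_iff]
    exact ⟨j, by simpa using hμ, fun j' hj' => update_of_ne hj' _ _⟩

end Hamming

section Repetition

variable {I : Type*} {q p : ℕ}

theorem repv_eq_uncurry (α : I → Fin q) : repv p α = uncurry fun _ => α := rfl

variable [Fintype I] [DecidableEq I]

theorem repHom_uncurry (x : Perm (I → Fin q)) (σ : Perm (Fin p)) (f : Fin p → I → Fin q) :
    repHom p I q (x, σ) (uncurry f) = uncurry ((fun j => x (f j)) ∘ ⇑σ⁻¹) := rfl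

theorem repHom_repv (x : Perm (I → Fin q)) (σ : Perm (Fin p)) (α : I → Fin q) :
    repHom p I q (x, σ) (repv p α) = repv p (x α) := rfl

theorem repHom_uncurry_update (x : Perm (I → Fin q)) (σ : Perm (Fin p)) (β μ : I → Fin q)
    (j : Fin p) :
    repHom p I q (x, σ) (uncurry (update (fun _ => β) j μ)) =
      uncurry (update (fun _ => x β) (σ j) (x μ)) := by
  rw [repHom_uncurry]
  congr 1
  funext j'
  rcases eq_or_ne j' (σ j) with rfl | hj'
  · simp
  · have : σ.symm j' ≠ j := by rwa [Ne, Equiv.symm_apply_eq]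
    simp [hj', this]

theorem repHom_mem_autH {x : Perm (I → Fin q)} (hx : x ∈ autH I q) (σ : Perm (Fin p)) :
    repHom p I q (x, σ) ∈ autH (Fin p × I) q := by
  intro a b
  rw [← uncurry_curry a, ← uncurry_curry b, repHom_uncurry, repHom_uncurry,
    hammingDist_uncurry_comp_equiv, hammingDist_uncurry_eq_one_iff,
    hammingDist_uncurry_eq_one_iff]
  simp only [hx _ _, x.injective.eq_iff]

theorem map_repHom_prod_top_le_autH {X : Subgroup (Perm (I → Fin q))} (hX : X ≤ autH I q) :
    (X.prod ⊤).map (repHom p I q) ≤ autH (Fin p × I) q := by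
  rintro _ ⟨⟨x, σ⟩, ⟨hx, -⟩, rfl⟩
  exact repHom_mem_autH (hX hx) σ

end Repetition

section Codes

variable {I : Type*} {q : ℕ} {X : Subgroup (Perm (I → Fin q))} {S C : Set (I → Fin q)}

theorem IsOrbitOf.nonempty (h : IsOrbitOf X S) : S.Nonempty := by
  obtain ⟨v, rfl⟩ := h
  exact ⟨v, 1, one_mem X, rfl⟩

theorem IsOrbitOf.apply_mem (h : IsOrbitOf X S) {x : Perm (I → Fin q)} (hx : x ∈ X)
    {a : I → Fin q} (ha : a ∈ S) : x a ∈ S := by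
  obtain ⟨v, rfl⟩ := h
  obtain ⟨x₀, hx₀, rfl⟩ := ha
  exact ⟨x * x₀, mul_mem hx hx₀, rfl⟩

theorem IsOrbitOf.exists_apply_eq (h : IsOrbitOf X S) {a b : I → Fin q} (ha : a ∈ S)
    (hb : b ∈ S) : ∃ x ∈ X, x a = b := by
  obtain ⟨v, rfl⟩ := h
  obtain ⟨x₀, hx₀, rfl⟩ := ha
  obtain ⟨x₁, hx₁, rfl⟩ := hb
  exact ⟨x₁ * x₀⁻¹, mul_mem hx₁ (inv_mem hx₀), by simp⟩

theorem isOrbitOf_of_mem {v : I → Fin q} (hv : v ∈ S) (hmaps : ∀ x ∈ X, ∀ w ∈ S, x w ∈ S)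
    (hreach : ∀ w ∈ S, ∃ x ∈ X, x v = w) : IsOrbitOf X S := by
  refine ⟨v, Set.ext fun w => ⟨hreach w, ?_⟩⟩
  rintro ⟨x, hx, rfl⟩
  exact hmaps x hx v hv

theorem mem_cell_one_iff [Fintype I] {ν : I → Fin q} :
    ν ∈ cell C 1 ↔ (∃ β ∈ C, hammingDist ν β = 1) ∧ ν ∉ C := by
  set D := {d | ∃ β ∈ C, hammingDist ν β = d}
  have hzero : 0 ∈ D ↔ ν ∈ C := by
    simp only [D, Set.mem_ofPred_eq, hammingDist_eq_zero, exists_eq_right']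
  change sInf D = 1 ↔ 1 ∈ D ∧ ν ∉ C
  constructor
  · intro h
    refine ⟨h ▸ Nat.sInf_mem (Nat.nonempty_of_pos_sInf (by omega)), fun hν => ?_⟩
    have := Nat.sInf_le (hzero.mpr hν)
    omega
  · rintro ⟨h1, hν⟩
    have hle := Nat.sInf_le h1
    have hne : sInf D ≠ 0 := by
      rw [Ne, Nat.sInf_eq_zero, hzero, not_or]
      exact ⟨hν, Set.nonempty_iff_ne_empty.mp ⟨1, h1⟩⟩
    omega

theorem IsOrbitOf.exists_apply_eq_apply_eq_of_stabilizer [Fintype I] [DecidableEq I]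
    (hX : X ≤ autH I q) (hC : IsOrbitOf X C) {α : I → Fin q} (hα : α ∈ C)
    (hstab : ∀ ν ν' : I → Fin q, hammingDist ν α = 1 → hammingDist ν' α = 1 →
      ∃ x ∈ X, x α = α ∧ x ν = ν')
    {β β' μ μ' : I → Fin q} (hβ : β ∈ C) (hβ' : β' ∈ C) (hμ : hammingDist μ β = 1)
    (hμ' : hammingDist μ' β' = 1) : ∃ x ∈ X, x β = β' ∧ x μ = μ' := by
  obtain ⟨g, hg, rfl⟩ := hC.exists_apply_eq hα hβ
  obtain ⟨g', hg', rfl⟩ := hC.exists_apply_eq hα hβ'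
  have hpull : ∀ {x}, x ∈ X → ∀ {ν}, hammingDist ν (x α) = 1 → hammingDist (x⁻¹ ν) α = 1 :=
    fun hx ν hν => by rw [← hX hx]; simpa using hν
  obtain ⟨h, hh, hhα, hhμ⟩ := hstab _ _ (hpull hg hμ) (hpull hg' hμ')
  exact ⟨g' * h * g⁻¹, mul_mem (mul_mem hg' hh) (inv_mem hg), by simp [hhα],
    by rw [Perm.mul_apply, Perm.mul_apply, hhμ]; simp⟩

end Codes

section RepetitionCodes

variable {I : Type*} [Fintype I] {q p : ℕ} {X : Subgroup (Perm (I → Fin q))}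
  {C : Set (I → Fin q)}

theorem hammingDist_repv_eq_one_iff {ν : Fin p × I → Fin q} {β : I → Fin q} :
    hammingDist ν (repv p β) = 1 ↔
      ∃ j μ, hammingDist μ β = 1 ∧ ν = uncurry (update (fun _ => β) j μ) :=
  hammingDist_uncurry_const_eq_one_iff

theorem IsOrbitOf.repCodeP [DecidableEq I] (hC : IsOrbitOf X C) :
    IsOrbitOf ((X.prod ⊤).map (repHom p I q)) (repCodeP p C) := by
  obtain ⟨α, hα⟩ := hC.nonempty
  refine isOrbitOf_of_mem ⟨α, hα, rfl⟩ ?_ ?_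
  · rintro _ ⟨⟨x, σ⟩, ⟨hx, -⟩, rfl⟩ _ ⟨β, hβ, rfl⟩
    exact ⟨x β, hC.apply_mem hx hβ, (repHom_repv x σ β).symm⟩
  · rintro _ ⟨β, hβ, rfl⟩
    obtain ⟨x, hx, rfl⟩ := hC.exists_apply_eq hα hβ
    exact ⟨repHom p I q (x, 1), Subgroup.mem_map_of_mem _ ⟨hx, trivial⟩, repHom_repv x 1 α⟩

theorem cell_repCodeP_one [DecidableEq I]
    (hδ : ∀ β ∈ C, ∀ γ ∈ C, β ≠ γ → 2 ≤ hammingDist β γ) :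
    cell (repCodeP p C) 1 = {ν | ∃ β ∈ C, hammingDist ν (repv p β) = 1} := by
  ext ν
  simp only [mem_cell_one_iff, repCodeP, Set.exists_mem_image, Set.mem_ofPred_eq,
    and_iff_left_iff_imp]
  rintro ⟨β, hβ, hνβ⟩ ⟨γ, hγ, rfl⟩
  rw [repv_eq_uncurry, repv_eq_uncurry, hammingDist_uncurry_eq_one_iff] at hνβ
  obtain ⟨-, hγβ, -⟩ := hνβ
  have := hδ γ hγ β hβ (hammingDist_ne_zero.mp (by omega))
  omega

theorem isOrbitOf_neighbours_repCodeP [DecidableEq I] (hX : X ≤ autH I q)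
    (hC : IsOrbitOf X C)
    (hpairs : ∀ β ∈ C, ∀ β' ∈ C, ∀ μ μ' : I → Fin q, hammingDist μ β = 1 →
      hammingDist μ' β' = 1 → ∃ x ∈ X, x β = β' ∧ x μ = μ')
    {β₀ μ₀ : I → Fin q} (hβ₀ : β₀ ∈ C) (hμ₀ : hammingDist μ₀ β₀ = 1) (j₀ : Fin p) :
    IsOrbitOf ((X.prod ⊤).map (repHom p I q))
      {ν | ∃ β ∈ C, hammingDist ν (repv p β) = 1} := by
  refine isOrbitOf_of_mem (v := uncurry (update (fun _ => β₀) j₀ μ₀))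
    ⟨β₀, hβ₀, hammingDist_repv_eq_one_iff.mpr ⟨j₀, μ₀, hμ₀, rfl⟩⟩ ?_ ?_
  · rintro _ ⟨⟨x, σ⟩, ⟨hx, -⟩, rfl⟩ _ ⟨β, hβ, hνβ⟩
    obtain ⟨j, μ, hμ, rfl⟩ := hammingDist_repv_eq_one_iff.mp hνβ
    refine ⟨x β, hC.apply_mem hx hβ, hammingDist_repv_eq_one_iff.mpr ?_⟩
    exact ⟨σ j, x μ, (hX hx μ β).mpr hμ, repHom_uncurry_update x σ β μ j⟩
  · rintro _ ⟨β, hβ, hνβ⟩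
    obtain ⟨j, μ, hμ, rfl⟩ := hammingDist_repv_eq_one_iff.mp hνβ
    obtain ⟨x, hx, rfl, rfl⟩ := hpairs β₀ hβ₀ β hβ μ₀ μ hμ₀ hμ
    refine ⟨repHom p I q (x, swap j₀ j), Subgroup.mem_map_of_mem _ ⟨hx, trivial⟩, ?_⟩
    rw [repHom_uncurry_update, swap_apply_left]

end RepetitionCodes

theorem rep_code_neighbour_transitive_general (m q p : ℕ) (hp : 0 < p)
    (C : Set (Fin m → Fin q)) (X : Subgroup (Equiv.Perm (Fin m → Fin q)))
    (hnt : NbrTransitive X C)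
    (hdelta : ∀ β ∈ C, ∀ γ ∈ C, β ≠ γ → 2 ≤ hammingDist β γ)
    (α : Fin m → Fin q) (hα : α ∈ C)
    (hstab : ∀ ν ν' : Fin m → Fin q, hammingDist ν α = 1 → hammingDist ν' α = 1 →
      ∃ x ∈ X, x α = α ∧ x ν = ν') :
    NbrTransitive (Subgroup.map (repHom p (Fin m) q) (X.prod ⊤)) (repCodeP p C) := by
  obtain ⟨hXaut, hCorb, hC1orb⟩ := hnt
  obtain ⟨μ₀, hμ₀⟩ := hC1orb.nonempty
  obtain ⟨⟨β₀, hβ₀, hμ₀β₀⟩, -⟩ := mem_cell_one_iff.mp hμ₀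
  refine ⟨map_repHom_prod_top_le_autH hXaut, hCorb.repCodeP, ?_⟩
  rw [cell_repCodeP_one hdelta]
  exact isOrbitOf_neighbours_repCodeP hXaut hCorb
    (fun _ hβ _ hβ' _ _ => hCorb.exists_apply_eq_apply_eq_of_stabilizer hXaut hα hstab hβ hβ')
    hβ₀ hμ₀β₀ ⟨0, hp⟩

/-- Lemma 2.10: if `C` is `X`-neighbour transitive with minimum
distance `δ ≥ 2` and some stabiliser `X_α` (`α ∈ C`) is transitive on `Γ_1(α)`, then
`Rep_p(C)` is `(X × S_p)`-neighbour transitive in `H(mp,q)`. -/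
theorem rep_code_neighbour_transitive (m q p : ℕ) (hm : 2 ≤ m) (hq : 2 ≤ q) (hp : 0 < p)
    (C : Set (Fin m → Fin q)) (X : Subgroup (Equiv.Perm (Fin m → Fin q)))
    (hnt : NbrTransitive X C)
    (hdelta : ∀ β ∈ C, ∀ γ ∈ C, β ≠ γ → 2 ≤ hammingDist β γ)
    (α : Fin m → Fin q) (hα : α ∈ C)
    (hstab : ∀ ν ν' : Fin m → Fin q, hammingDist ν α = 1 → hammingDist ν' α = 1 →
      ∃ x ∈ X, x α = α ∧ x ν = ν') :
    NbrTransitive (Subgroup.map (repHom p (Fin m) q) (X.prod ⊤)) (repCodeP p C) :=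
  rep_code_neighbour_transitive_general m q p hp C X hnt hdelta α hα hstab
end

section
/- Let q ≥ 2 and let p be a positive integer, and set m = pq. The code All(pq,q) in H(pq,q), consisting of all vertices in which every letter of the alphabet occurs exactly p times, is neighbour transitive, has automorphism group Aut(All(pq,q)) = Diag_m(S_q) ⋊ L, and has minimum distance δ = 2. -/
/-!
An automorphism of the Hamming graph is an isometry, so it maps every line (the vertices that
differ from a given one only in coordinate `i`) into a line. The two lines through opposite
corners of a square are mapped to parallel lines, hence the direction of the image line depends
only on `i`; this gives `Aut(H(m,q)) = S_q^m ⋊ L`.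

The codewords of `All(pq,q)` are the coordinate permutations of one of them, and its neighbours
are the words obtained by changing one letter of a codeword, so `Diag_m(S_q) ⋊ L` is transitive
on both. An automorphism `(g, σ)` of `H(m,q)` fixing the code has all `g i` equal, as the
letter counts of the images of a codeword and of the codeword with two positions swapped show.
Two codewords never differ in one position, since that changes two letter counts, and a
transposition of two distinct letters gives distance `2`.
-/

open Equiv Pointwise

open Function Finset in
theorem apply_eq_apply_of_update_invariant {ι A B : Type*} [Fintype ι] [DecidableEq ι]
    {f : (ι → A) → B} {S : Set ι}
    (hf : ∀ x k b, k ∉ S → f (update x k b) = f x) {x y : ι → A}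
    (hxy : ∀ i ∈ S, x i = y i) : f x = f y := by
  suffices key : ∀ s : Finset ι, ∀ x : ι → A, (∀ i ∈ S, x i = y i) →
      (∀ k ∉ s, x k = y k) → f x = f y from key univ x hxy (by simp)
  intro s
  induction s using Finset.induction_on with
  | empty => exact fun x _ h => congrArg f (funext fun k => h k (notMem_empty k))
  | insert k s _ ih =>
    intro x hS hs
    have hstep : f (update x k (y k)) = f x := by
      by_cases hkS : k ∈ S
      · rw [← hS k hkS, update_eq_self]
      · simpa using (hf (update x k (y k)) k (x k) hkS).symm
    rw [← hstep]
    refine ih _ (fun i hi => ?_) (fun m hm => ?_)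
    · rcases eq_or_ne i k with rfl | hik
      · simp
      · rw [update_of_ne hik, hS i hi]
    · rcases eq_or_ne m k with rfl | hmk
      · simp
      · rw [update_of_ne hmk, hs m (by simp [hmk, hm])]

section HammingSpace

open Function Finset

variable {ι A : Type*} [Fintype ι] [DecidableEq A]

theorem hammingDist_eq_one_iff {x y : ι → A} :
    hammingDist x y = 1 ↔ ∃ j, x j ≠ y j ∧ ∀ k ≠ j, x k = y k := by
  simp only [hammingDist, card_eq_one, eq_singleton_iff_unique_mem, mem_filter, mem_univ,
    true_and]
  exact exists_congr fun j => and_congr_right fun _ => forall_congr' fun k => not_imp_comm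

theorem hammingDist_le_one_of_eqOn {x y : ι → A} {j : ι} (h : ∀ k ≠ j, x k = y k) :
    hammingDist x y ≤ 1 :=
  (card_le_card (t := {j}) fun k hk =>
    mem_singleton.2 (not_imp_comm.1 (h k) (mem_filter.1 hk).2)).trans (card_singleton j).le

theorem apply_ne_of_two_le_hammingDist {x y : ι → A} {i j : ι} (hd : 2 ≤ hammingDist x y)
    (h : ∀ k, k ≠ i → k ≠ j → x k = y k) : x i ≠ y i := by
  intro hi
  have := hammingDist_le_one_of_eqOn (x := x) (y := y) (j := j) fun k hk => by
    rcases eq_or_ne k i with rfl | hki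
    · exact hi
    · exact h k hki hk
  omega

theorem apply_eq_of_hammingDist_eq_one {x y : ι → A} {j : ι} (hd : hammingDist x y = 1)
    (hj : x j ≠ y j) : ∀ k ≠ j, x k = y k := by
  obtain ⟨i, hi, hoff⟩ := hammingDist_eq_one_iff.1 hd
  obtain rfl : j = i := by_contra fun hji => hj (hoff j hji)
  exact hoff

theorem hammingDist_comp_equiv {κ : Type*} [Fintype κ] (e : κ ≃ ι) (x z : ι → A) :
    hammingDist (x ∘ e) (z ∘ e) = hammingDist x z :=
  card_equiv e (by simp)

theorem injective_of_hammingDist_eq {κ B : Type*} [Fintype κ] [DecidableEq B]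
    {y : (ι → A) → κ → B} (hy : ∀ x z, hammingDist (y x) (y z) = hammingDist x z) :
    Injective y := fun x z h =>
  hammingDist_eq_zero.1 ((hy x z).symm.trans (by rw [h, hammingDist_self]))

variable [DecidableEq ι]

theorem two_le_hammingDist {x y : ι → A} {i j : ι} (hij : i ≠ j) (hi : x i ≠ y i)
    (hj : x j ≠ y j) : 2 ≤ hammingDist x y :=
  (card_pair hij).symm.le.trans <| card_le_card fun k hk => by
    simp only [mem_insert, mem_singleton] at hk
    rcases hk with rfl | rfl <;> simpa

theorem hammingDist_update_self_s9 {x : ι → A} {i : ι} {c : A} (hc : c ≠ x i) :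
    hammingDist (update x i c) x = 1 :=
  hammingDist_eq_one_iff.2 ⟨i, by simpa using hc, fun _ hk => update_of_ne hk _ _⟩

theorem hammingDist_comp_swap {x : ι → A} {i j : ι} (h : x i ≠ x j) :
    hammingDist x (x ∘ Equiv.swap i j) = 2 := by
  have hij : i ≠ j := fun e => h (congrArg x e)
  rw [hammingDist, ← card_pair hij]
  congr 1
  ext k
  rcases eq_or_ne k i with rfl | hki
  · simpa using h
  rcases eq_or_ne k j with rfl | hkj
  · simpa using h.symm
  simp [Equiv.swap_apply_of_ne_of_ne hki hkj, hki, hkj]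

theorem hammingDist_apply_le {κ B : Type*} [Fintype κ] [DecidableEq B]
    {y : (ι → A) → κ → B}
    (hy : ∀ x z, hammingDist x z = 1 → hammingDist (y x) (y z) ≤ 1)
    (x z : ι → A) : hammingDist (y x) (y z) ≤ hammingDist x z := by
  suffices key : ∀ s : Finset ι, ∀ x : ι → A, (∀ k ∉ s, x k = z k) →
      hammingDist (y x) (y z) ≤ #s by
    exact key _ x fun k hk => by simpa using hk
  intro s
  induction s using Finset.induction_on with
  | empty => exact fun x h => by simp [funext fun k => h k (notMem_empty k)]
  | insert k s hks ih =>
    intro x hs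
    have hstep : hammingDist (y x) (y (update x k (z k))) ≤ 1 := by
      rcases eq_or_ne (z k) (x k) with h | h
      · simp [h]
      · exact hy _ _ (by rw [hammingDist_comm, hammingDist_update_self_s9 h])
    have hrest := ih (update x k (z k)) fun m hm => by
      rcases eq_or_ne m k with rfl | hmk
      · simp
      · rw [update_of_ne hmk, hs m (by simp [hmk, hm])]
    calc hammingDist (y x) (y z)
        ≤ hammingDist (y x) (y (update x k (z k))) + hammingDist (y (update x k (z k))) (y z) :=
          hammingDist_triangle _ _ _
      _ ≤ #(insert k s) := by rw [card_insert_of_notMem hks]; omega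

end HammingSpace

section Isometry

open Function

variable {ι A : Type*} [Fintype ι] [DecidableEq ι] [DecidableEq A] {y : (ι → A) → ι → A}

/-- `y` maps the line through `x` in direction `i` into the line through `y x` in
direction `j`. -/
def MapsLine (y : (ι → A) → ι → A) (x : ι → A) (i j : ι) : Prop :=
  ∀ c, ∀ k ≠ j, y (update x i c) k = y x k

theorem MapsLine.apply_ne (hy : ∀ x z, hammingDist (y x) (y z) = hammingDist x z)
    {x : ι → A} {i j : ι} (hL : MapsLine y x i j) {c : A} (hc : c ≠ x i) :
    y (update x i c) j ≠ y x j := fun h =>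
  hc <| by simpa using congrFun (injective_of_hammingDist_eq hy (funext fun k =>
    (eq_or_ne k j).elim (fun hk => hk ▸ h) (hL c k)) : update x i c = x) i

theorem exists_mapsLine [Nontrivial A] (hy : ∀ x z, hammingDist (y x) (y z) = hammingDist x z)
    (x : ι → A) (i : ι) : ∃ j, MapsLine y x i j := by
  obtain ⟨c₀, hc₀⟩ := exists_ne (x i)
  have hd₀ := (hy _ _).trans (hammingDist_update_self_s9 hc₀)
  obtain ⟨j, hj, -⟩ := hammingDist_eq_one_iff.1 hd₀
  refine ⟨j, fun c k hkj => by_contra fun hk => ?_⟩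
  have hc : c ≠ x i := by rintro rfl; simp at hk
  have hoff := apply_eq_of_hammingDist_eq_one ((hy _ _).trans (hammingDist_update_self_s9 hc)) hk
  have h2 : 2 ≤ hammingDist (y (update x i c)) (y (update x i c₀)) :=
    two_le_hammingDist hkj (by rwa [apply_eq_of_hammingDist_eq_one hd₀ hj k hkj])
      (by rw [hoff j hkj.symm]; exact hj.symm)
  have h1 : hammingDist (update x i c) (update x i c₀) ≤ 1 :=
    hammingDist_le_one_of_eqOn (j := i) fun m hm => by simp [update_of_ne hm]
  rw [hy] at h2
  omega

variable {J : (ι → A) → ι → ι}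

theorem injective_of_forall_mapsLine [Nontrivial A]
    (hy : ∀ x z, hammingDist (y x) (y z) = hammingDist x z)
    (hJ : ∀ x i, MapsLine y x i (J x i)) (x : ι → A) : Injective (J x) := by
  intro i i' hii'
  by_contra hne
  obtain ⟨c, hc⟩ := exists_ne (x i)
  obtain ⟨c', hc'⟩ := exists_ne (x i')
  have h1 : hammingDist (y (update x i c)) (y (update x i' c')) ≤ 1 :=
    hammingDist_le_one_of_eqOn fun k hk => by rw [hJ x i c k hk, hJ x i' c' k (hii' ▸ hk)]
  have h2 : 2 ≤ hammingDist (update x i c) (update x i' c') :=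
    two_le_hammingDist hne (by simpa [update_of_ne hne] using hc)
      (by simpa [update_of_ne (Ne.symm hne)] using hc'.symm)
  rw [hy] at h1
  omega

theorem direction_update_self (hy : ∀ x z, hammingDist (y x) (y z) = hammingDist x z)
    (hJ : ∀ x i, MapsLine y x i (J x i)) (x : ι → A) (k : ι) (b : A) :
    J (update x k b) k = J x k := by
  rcases eq_or_ne b (x k) with rfl | hb
  · simp
  by_contra hne
  have hback := hJ (update x k b) k (x k) (J x k) (Ne.symm hne)
  rw [update_idem, update_eq_self] at hback
  exact (hJ x k).apply_ne hy hb hback.symm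

/-- Opposite sides of a square in the Hamming graph are mapped to parallel lines. -/
theorem direction_update_of_ne [Nontrivial A]
    (hy : ∀ x z, hammingDist (y x) (y z) = hammingDist x z)
    (hJ : ∀ x i, MapsLine y x i (J x i)) (x : ι → A) {i k : ι} (hik : i ≠ k) (b : A) :
    J (update x k b) i = J x i := by
  rcases eq_or_ne b (x k) with rfl | hb
  · simp
  obtain ⟨c, hc⟩ := exists_ne (x i)
  by_contra hne
  have hJik : J x i ≠ J x k := (injective_of_forall_mapsLine hy hJ x).ne hik
  have hd : 2 ≤ hammingDist (y (update (update x k b) i c)) (y x) := by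
    rw [hy]
    exact two_le_hammingDist hik (by simpa using hc) (by simpa [update_of_ne hik.symm] using hb)
  have hsq : ∀ m, m ≠ J x i → m ≠ J (update x i c) k →
      y (update (update x k b) i c) m = y x m := fun m h₁ h₂ => by
    rw [update_comm hik.symm, hJ (update x i c) k b m h₂, hJ x i c m h₁]
  refine apply_ne_of_two_le_hammingDist hd hsq ?_
  rw [hJ (update x k b) i c _ (Ne.symm hne), hJ x k b _ hJik]

theorem direction_eq [Nontrivial A] (hy : ∀ x z, hammingDist (y x) (y z) = hammingDist x z)
    (hJ : ∀ x i, MapsLine y x i (J x i)) (x z : ι → A) : J x = J z :=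
  apply_eq_apply_of_update_invariant (S := ∅) (fun x k b _ => funext fun i =>
    (eq_or_ne i k).elim (fun h => h ▸ direction_update_self hy hJ x k b)
      (fun h => direction_update_of_ne hy hJ x h b)) (by simp)

theorem exists_perm_of_isometry [Finite A] [Nontrivial A]
    (hy : ∀ x z, hammingDist (y x) (y z) = hammingDist x z) :
    ∃ (g : ι → Equiv.Perm A) (σ : Equiv.Perm ι), ∀ x i, y x (σ i) = g i (x i) := by
  choose J hJ using exists_mapsLine hy
  obtain ⟨a, -⟩ := exists_pair_ne A
  set σ := J fun _ => a
  have hσ : Injective σ := injective_of_forall_mapsLine hy hJ _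
  have hcoord : ∀ x i, y x (σ i) = y (update (fun _ => a) i (x i)) (σ i) := fun x i =>
    apply_eq_apply_of_update_invariant (S := {i}) (f := fun x => y x (σ i))
      (fun x k b hk => hJ x k b _ <| by
        rw [direction_eq hy hJ x fun _ => a]
        exact hσ.ne (by simpa [eq_comm] using hk))
      (by simp)
  have hg : ∀ i, Injective fun c => y (update (fun _ => a) i c) (σ i) := fun i c c' h => by
    have : y (update (fun _ => a) i c) = y (update (fun _ => a) i c') := funext fun k => by
      rcases eq_or_ne k (σ i) with rfl | hk
      · exact h
      · rw [hJ _ i c k hk, hJ _ i c' k hk]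
    simpa using congrFun (injective_of_hammingDist_eq hy this) i
  exact ⟨fun i => Equiv.ofBijective _ (Finite.injective_iff_bijective.1 (hg i)),
    Equiv.ofBijective σ (Finite.injective_iff_bijective.1 hσ), hcoord⟩

end Isometry

theorem Equiv.Perm.exists_apply_eq_apply_eq {X : Type*} [DecidableEq X] {a b c d : X}
    (hab : a ≠ b) (hcd : c ≠ d) : ∃ τ : Equiv.Perm X, τ a = c ∧ τ b = d := by
  have hb : Equiv.swap a c b ≠ c := fun h =>
    hab ((Equiv.swap a c).injective (h.trans (Equiv.swap_apply_left a c).symm)).symm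
  refine ⟨Equiv.swap (Equiv.swap a c b) d * Equiv.swap a c, ?_, by simp⟩
  simpa using Equiv.swap_apply_of_ne_of_ne hb.symm hcd

section HammingGraph

open Function Finset

variable {I : Type*} {q p : ℕ}

@[simp]
theorem tvp_apply (g : I → Equiv.Perm (Fin q)) (σ : Equiv.Perm I) (x : I → Fin q) (i : I) :
    tvp g σ x i = g (σ⁻¹ i) (x (σ⁻¹ i)) :=
  rfl

@[simp]
theorem tvp_apply_apply (g : I → Equiv.Perm (Fin q)) (σ : Equiv.Perm I) (x : I → Fin q)
    (i : I) : tvp g σ x (σ i) = g i (x i) := by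
  simp

theorem tvp_const (h : Equiv.Perm (Fin q)) (σ : Equiv.Perm I) (x : I → Fin q) :
    tvp (fun _ => h) σ x = h ∘ x ∘ σ.symm :=
  rfl

theorem diagLHom_apply [Fintype I] [DecidableEq I] (h : Equiv.Perm (Fin q))
    (σ : Equiv.Perm I) : diagLHom I q (h, σ) = tvp (fun _ => h) σ :=
  rfl

theorem tvp_update [DecidableEq I] (g : I → Equiv.Perm (Fin q)) (σ : Equiv.Perm I)
    (x : I → Fin q) (i : I) (c : Fin q) :
    tvp g σ (update x i c) = update (tvp g σ x) (σ i) (g i c) := by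
  funext m
  rcases eq_or_ne m (σ i) with rfl | hm
  · simp
  · have : σ.symm m ≠ i := fun h => hm (by rw [← h]; simp)
    simp [hm, this]

variable [Fintype I]

theorem hammingDist_tvp (g : I → Equiv.Perm (Fin q)) (σ : Equiv.Perm I) (x z : I → Fin q) :
    hammingDist (tvp g σ x) (tvp g σ z) = hammingDist x z := by
  change hammingDist ((fun i => g i (x i)) ∘ σ.symm) ((fun i => g i (z i)) ∘ σ.symm) = _
  rw [hammingDist_comp_equiv, hammingDist_comp _ fun i => (g i).injective]

theorem cnt_comp_equiv {J : Type*} [Fintype J] [DecidableEq J] (x : I → Fin q) (e : J ≃ I)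
    (a : Fin q) : cnt (x ∘ e) a = cnt x a :=
  card_equiv e (by simp)

theorem cnt_perm_comp (h : Equiv.Perm (Fin q)) (x : I → Fin q) (a : Fin q) :
    cnt (h ∘ x) a = cnt x (h⁻¹ a) := by
  simp [cnt, Equiv.Perm.inv_def, Equiv.eq_symm_apply]

theorem exists_perm_comp_eq_of_cnt_eq {x z : I → Fin q} (h : ∀ a, cnt x a = cnt z a) :
    ∃ e : Equiv.Perm I, x ∘ e = z := by
  have e : ∀ a, {i // z i = a} ≃ {i // x i = a} := fun a =>
    Fintype.equivOfCardEq (by rw [Fintype.card_subtype, Fintype.card_subtype]; exact (h a).symm)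
  refine ⟨(Equiv.sigmaFiberEquiv z).symm.trans
    ((Equiv.sigmaCongrRight e).trans (Equiv.sigmaFiberEquiv x)), funext fun i => ?_⟩
  exact (e (z i) ⟨i, rfl⟩).2

variable [DecidableEq I]

theorem hammingDist_apply_eq_of_mem_autH {y : Equiv.Perm (I → Fin q)} (hy : y ∈ autH I q)
    (x z : I → Fin q) : hammingDist (y x) (y z) = hammingDist x z := by
  have lip : ∀ y ∈ autH I q, ∀ x z : I → Fin q,
      hammingDist (y x) (y z) ≤ hammingDist x z :=
    fun y hy => hammingDist_apply_le fun x z h => ((hy x z).2 h).le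
  refine le_antisymm (lip y hy x z) ?_
  simpa using lip y⁻¹ (inv_mem hy) (y x) (y z)

theorem exists_eq_tvp_of_mem_autH [Nontrivial (Fin q)] {y : Equiv.Perm (I → Fin q)}
    (hy : y ∈ autH I q) :
    ∃ (g : I → Equiv.Perm (Fin q)) (σ : Equiv.Perm I), y = tvp g σ := by
  obtain ⟨g, σ, h⟩ := exists_perm_of_isometry (hammingDist_apply_eq_of_mem_autH hy)
  exact ⟨g, σ, Equiv.ext fun x => funext fun i => by simpa using h x (σ⁻¹ i)⟩

theorem diagL_le_autH : diagL I q ≤ autH I q := by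
  rintro _ ⟨⟨h, σ⟩, rfl⟩ x z
  rw [diagLHom_apply, hammingDist_tvp]

theorem cnt_update_add (x : I → Fin q) (i : I) (c a : Fin q) :
    cnt (update x i c) a + (if x i = a then 1 else 0) = cnt x a + (if c = a then 1 else 0) := by
  simp only [cnt, card_filter]
  rw [← add_sum_erase _ _ (mem_univ i), ← add_sum_erase _ (fun k => if x k = a then 1 else 0)
    (mem_univ i), sum_congr rfl fun k hk => by rw [update_of_ne (ne_of_mem_erase hk)]]
  simp only [update_self]
  omega

theorem exists_perm_comp_eq_of_cnt_eq_of_apply_eq {x z : I → Fin q}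
    (h : ∀ a, cnt x a = cnt z a) {i j : I} (hij : x i = z j) :
    ∃ e : Equiv.Perm I, x ∘ e = z ∧ e j = i := by
  obtain ⟨e, rfl⟩ := exists_perm_comp_eq_of_cnt_eq h
  replace hij : x i = x (e j) := hij
  have hswap : x ∘ Equiv.swap (e j) i = x := by
    rw [Equiv.comp_swap_eq_update, ← hij, update_eq_self, hij, update_eq_self]
  exact ⟨Equiv.swap (e j) i * e, by rw [Equiv.Perm.coe_mul, ← comp_assoc, hswap], by simp⟩

end HammingGraph

section Codes

variable {I : Type*} {q : ℕ}

theorem isOrbitOf_of_forall {X : Subgroup (Equiv.Perm (I → Fin q))} {S : Set (I → Fin q)}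
    {v : I → Fin q} (hX : ∀ x ∈ X, x v ∈ S) (hS : ∀ w ∈ S, ∃ x ∈ X, x v = w) :
    IsOrbitOf X S :=
  ⟨v, Set.ext fun w => ⟨hS w, fun ⟨x, hx, e⟩ => e ▸ hX x hx⟩⟩

variable [Fintype I] {C : Set (I → Fin q)}

theorem distC_eq_one_iff {γ : I → Fin q} :
    distC γ C = 1 ↔ γ ∉ C ∧ ∃ β ∈ C, hammingDist γ β = 1 := by
  constructor
  · intro h
    refine ⟨fun hγ => ?_, h ▸ Nat.sInf_mem (Nat.nonempty_of_pos_sInf (h ▸ one_pos))⟩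
    have : distC γ C ≤ 0 := Nat.sInf_le ⟨γ, hγ, hammingDist_self γ⟩
    omega
  · rintro ⟨hγ, β, hβ, hd⟩
    have h1 : distC γ C ≤ 1 := Nat.sInf_le ⟨β, hβ, hd⟩
    have h0 : distC γ C ≠ 0 := by
      rintro h0
      rcases Nat.sInf_eq_zero.1 h0 with ⟨β', hβ', hd'⟩ | hempty
      · exact hγ (hammingDist_eq_zero.1 hd' ▸ hβ')
      · exact hempty.subset ⟨β, hβ, hd⟩
    omega

variable [DecidableEq I]

theorem apply_mem_iff_of_mem_autCode {y : Equiv.Perm (I → Fin q)} (hy : y ∈ autCode C)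
    (x : I → Fin q) : y x ∈ C ↔ x ∈ C :=
  MulAction.mem_stabilizer_set.1 hy.2 x

theorem apply_mem_cell_one_of_mem_autCode {y : Equiv.Perm (I → Fin q)} (hy : y ∈ autCode C)
    {γ : I → Fin q} (hγ : γ ∈ cell C 1) : y γ ∈ cell C 1 := by
  obtain ⟨hγC, β, hβ, hd⟩ := distC_eq_one_iff.1 hγ
  exact distC_eq_one_iff.2 ⟨(apply_mem_iff_of_mem_autCode hy γ).not.2 hγC, y β,
    (apply_mem_iff_of_mem_autCode hy β).2 hβ,
    (hammingDist_apply_eq_of_mem_autH hy.1 γ β).trans hd⟩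

end Codes

section AllCode

open Function

variable {I : Type*} [Fintype I] [DecidableEq I] {q p : ℕ} {x : I → Fin q}

theorem comp_equiv_mem_allCode (hx : x ∈ allCode I q p) (e : Equiv.Perm I) :
    x ∘ e ∈ allCode I q p := fun a => (cnt_comp_equiv x e a).trans (hx a)

theorem exists_apply_eq_of_mem_allCode (hp : 0 < p) (hx : x ∈ allCode I q p) (a : Fin q) :
    ∃ i, x i = a := by
  obtain ⟨i, hi⟩ := Finset.card_pos.1 ((hx a).symm ▸ hp : 0 < cnt x a)
  exact ⟨i, (Finset.mem_filter.1 hi).2⟩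

theorem exists_mem_allCode_apply_eq_apply_eq (hp : 0 < p) (hx : x ∈ allCode I q p) {i j : I}
    (hij : i ≠ j) {c d : Fin q} (hcd : c ≠ d) :
    ∃ z ∈ allCode I q p, z i = c ∧ z j = d := by
  obtain ⟨i', rfl⟩ := exists_apply_eq_of_mem_allCode hp hx c
  obtain ⟨j', rfl⟩ := exists_apply_eq_of_mem_allCode hp hx d
  obtain ⟨τ, hτi, hτj⟩ := Equiv.Perm.exists_apply_eq_apply_eq hij (ne_of_apply_ne x hcd)
  exact ⟨x ∘ τ, comp_equiv_mem_allCode hx τ, by simp [hτi], by simp [hτj]⟩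

theorem hammingDist_ne_one_of_mem_allCode {z : I → Fin q} (hx : x ∈ allCode I q p)
    (hz : z ∈ allCode I q p) : hammingDist x z ≠ 1 := fun hd => by
  obtain ⟨i, hi, hoff⟩ := hammingDist_eq_one_iff.1 hd
  have hcnt := cnt_update_add x i (z i) (z i)
  rw [(update_eq_iff.2 ⟨rfl, hoff⟩ : update x i (z i) = z), hx, hz, if_neg hi] at hcnt
  simp at hcnt

theorem minDist_allCode [Nontrivial (Fin q)] (hp : 0 < p) (hx : x ∈ allCode I q p) :
    minDist (allCode I q p) = 2 := by
  obtain ⟨a, b, hab⟩ := exists_pair_ne (Fin q)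
  obtain ⟨i, rfl⟩ := exists_apply_eq_of_mem_allCode hp hx a
  obtain ⟨j, rfl⟩ := exists_apply_eq_of_mem_allCode hp hx b
  refine IsLeast.csInf_eq ⟨⟨x, hx, x ∘ Equiv.swap i j, comp_equiv_mem_allCode hx _,
    fun h => hab (by simpa using congrFun h i), hammingDist_comp_swap hab⟩, ?_⟩
  rintro _ ⟨β, hβ, γ, hγ, hne, rfl⟩
  have := hammingDist_ne_zero.2 hne
  have := hammingDist_ne_one_of_mem_allCode hβ hγ
  omega

theorem diagL_le_autCode_allCode : diagL I q ≤ autCode (allCode I q p) := by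
  rintro _ ⟨⟨h, σ⟩, rfl⟩
  refine ⟨diagL_le_autH ⟨_, rfl⟩, MulAction.mem_stabilizer_set.2 fun x => ?_⟩
  change (∀ a, cnt (tvp (fun _ => h) σ x) a = p) ↔ ∀ a, cnt x a = p
  simp only [tvp_const, cnt_comp_equiv, cnt_perm_comp]
  exact ⟨fun H a => by simpa using H (h a), fun H a => H _⟩

/-- Counting the letter `g i (α i)` in the images of `α`, `update α j (α i)` and
`α ∘ swap i j` shows that it also equals `g j (α i)`. -/
theorem perm_eq_of_tvp_mem_autCode_allCode [Nontrivial (Fin q)] (hp : 0 < p)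
    (hx : x ∈ allCode I q p) {g : I → Equiv.Perm (Fin q)} {σ : Equiv.Perm I}
    (hy : tvp g σ ∈ autCode (allCode I q p)) (i j : I) : g i = g j := by
  rcases eq_or_ne i j with rfl | hij
  · rfl
  refine Equiv.ext fun c => ?_
  obtain ⟨d, hd⟩ := exists_ne c
  obtain ⟨α, hα, hαi, hαj⟩ := exists_mem_allCode_apply_eq_apply_eq hp hx hij hd.symm
  have hswap : α ∘ Equiv.swap i j = update (update α j c) i d := by
    rw [Equiv.comp_swap_eq_update, hαi, hαj]
  have hαC := (apply_mem_iff_of_mem_autCode hy α).2 hα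
  have hβC :=
    (apply_mem_iff_of_mem_autCode hy _).2 (comp_equiv_mem_allCode hα (Equiv.swap i j))
  rw [hswap, tvp_update, tvp_update] at hβC
  have h₁ := cnt_update_add (tvp g σ α) (σ j) (g j c) (g i c)
  have h₂ := cnt_update_add (update (tvp g σ α) (σ j) (g j c)) (σ i) (g i d) (g i c)
  rw [hαC, tvp_apply_apply, hαj] at h₁
  rw [hβC, update_of_ne (σ.injective.ne hij), tvp_apply_apply, hαi,
    if_pos rfl, if_neg ((g i).injective.ne hd)] at h₂
  by_contra hne
  rw [if_neg (Ne.symm hne)] at h₁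
  omega

theorem autCode_allCode [Nontrivial (Fin q)] (hp : 0 < p) (hx : x ∈ allCode I q p) :
    autCode (allCode I q p) = diagL I q := by
  refine le_antisymm (fun y hy => ?_) diagL_le_autCode_allCode
  obtain ⟨g, σ, rfl⟩ := exists_eq_tvp_of_mem_autH hy.1
  obtain ⟨a, -⟩ := exists_pair_ne (Fin q)
  obtain ⟨i₀, -⟩ := exists_apply_eq_of_mem_allCode hp hx a
  rw [show g = fun _ => g i₀ from
    funext fun i => perm_eq_of_tvp_mem_autCode_allCode hp hx hy i i₀]
  exact ⟨(g i₀, σ), rfl⟩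

theorem nbrTransitive_allCode [Nontrivial (Fin q)] (hp : 0 < p) (hx : x ∈ allCode I q p) :
    NbrTransitive (diagL I q) (allCode I q p) := by
  have hdiag : diagL I q ≤ autCode (allCode I q p) := diagL_le_autCode_allCode
  obtain ⟨a, b, hab⟩ := exists_pair_ne (Fin q)
  obtain ⟨k, rfl⟩ := exists_apply_eq_of_mem_allCode hp hx a
  have hxγ : hammingDist (update x k b) x = 1 := hammingDist_update_self_s9 hab.symm
  have hγ : update x k b ∈ cell (allCode I q p) 1 := distC_eq_one_iff.2
    ⟨fun h => hammingDist_ne_one_of_mem_allCode h hx hxγ, x, hx, hxγ⟩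
  refine ⟨diagL_le_autH,
    isOrbitOf_of_forall (fun y hy => (apply_mem_iff_of_mem_autCode (hdiag hy) x).2 hx)
      fun z hz => ?_,
    isOrbitOf_of_forall (fun y hy => apply_mem_cell_one_of_mem_autCode (hdiag hy) hγ)
      fun z hz => ?_⟩
  · obtain ⟨e, rfl⟩ := exists_perm_comp_eq_of_cnt_eq fun a => (hx a).trans (hz a).symm
    exact ⟨_, ⟨(1, e⁻¹), rfl⟩, rfl⟩
  · obtain ⟨-, β, hβ, hd⟩ := distC_eq_one_iff.1 hz
    obtain ⟨i, hi, hoff⟩ := hammingDist_eq_one_iff.1 hd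
    obtain ⟨h, hha, hhb⟩ := Equiv.Perm.exists_apply_eq_apply_eq hab (Ne.symm hi)
    obtain ⟨e, he, hei⟩ := exists_perm_comp_eq_of_cnt_eq_of_apply_eq (x := h ∘ x) (z := β)
      (fun c => by rw [cnt_perm_comp, hx, hβ]) (i := k) (j := i) (by simp [hha])
    have hβ' : tvp (fun _ => h) e⁻¹ x = β := he
    refine ⟨tvp (fun _ => h) e⁻¹, ⟨(h, e⁻¹), rfl⟩, ?_⟩
    rw [tvp_update, hβ', ← hei, Equiv.Perm.coe_inv, Equiv.symm_apply_apply, hhb]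
    exact update_eq_iff.2 ⟨rfl, fun m hm => (hoff m hm).symm⟩

end AllCode

theorem allCode_fin_mul_nonempty (p q : ℕ) : (allCode (Fin (p * q)) q p).Nonempty :=
  ⟨Prod.snd ∘ finProdFinEquiv.symm, fun a => by
    rw [cnt_comp_equiv]
    simp only [cnt, ← Finset.univ_product_univ]
    rw [Finset.filter_product_right (· = a), Finset.filter_eq']
    simp⟩

/-- Theorem 3.3(iv): for `m = pq`, the code `All(pq,q)` of all vertices
in which every letter occurs exactly `p` times is neighbour transitive,
`Aut(All(pq,q)) = Diag_m(S_q) ⋊ L`, and its minimum distance is `2`. -/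
theorem allCode_neighbour_transitive (p q : ℕ) (hq : 2 ≤ q) (hp : 0 < p) :
    (∃ X : Subgroup (Equiv.Perm (Fin (p * q) → Fin q)),
      NbrTransitive X (allCode (Fin (p * q)) q p)) ∧
    autCode (allCode (Fin (p * q)) q p) = diagL (Fin (p * q)) q ∧
    minDist (allCode (Fin (p * q)) q p) = 2 := by
  have : Nontrivial (Fin q) := Fin.nontrivial_iff_two_le.2 hq
  obtain ⟨x, hx⟩ := allCode_fin_mul_nonempty p q
  exact ⟨⟨_, nbrTransitive_allCode hp hx⟩, autCode_allCode hp hx, minDist_allCode hp hx⟩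
end
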